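/- arXiv:1401.1627 — 4 statements merged into one kernel-verified Lean document; each statement's English description precedes it below -/
import Mathlib

section
/- Let c₁, c₂, n₁, n₂ > 0 be real numbers, m_j := n_j/c_j (j = 1,2), and r₀ ≥ 0 real. Set ρ_j := i√(r₀ + m_j) (the unique complex number with positive imaginary part satisfying ρ_j² + r₀ = m_j·(−1)) and κ(−1) := n₂/(2ρ₂) − n₁/(2ρ₁). Then Re κ(−1) = 0 and Im κ(−1) = (1/2)(n₁/√(r₀ + m₁) − n₂/√(r₀ + m₂)). If moreover (c₁ − c₂)(c₁n₁ − c₂n₂) < 0, then for every r₀ ≥ 0 the number Im κ(−1) is nonzero and has the same sign as c₁n₁ − c₂n₂ (so of constant sign, independent of r₀), and there exists a constant C > 0 depending only on c₁, c₂, n₁, n₂ such that |κ(−1)| ≥ C(1 + r₀)^{−1/2} for all r₀ ≥ 0. -/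
/-!
With `sⱼ = √(r₀ + mⱼ) > 0` one has `ρⱼ = i sⱼ`, hence `κ(−1) = i · ½ (n₁/s₁ − n₂/s₂)`, and
`n₁/s₁ − n₂/s₂ = (n₁²s₂² − n₂²s₁²) / (s₁s₂(n₁s₂ + n₂s₁))`. For `e = c₁n₁ − c₂n₂` the numerator
times `e` is the affine function `r₀ (n₁² − n₂²) e + n₁n₂e²/(c₁c₂)` of `r₀`. Condition (1.8) forces
`n₁ − n₂` to have the sign of `e`, so both coefficients are positive and this is at least a constant
times `1 + r₀`, while the denominator is `O((1 + r₀)^{3/2})`.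
-/

open Complex

lemma I_mul_ofReal_sqrt_sq {x : ℝ} (hx : 0 ≤ x) : (I * (√x : ℂ)) ^ 2 = -x := by
  rw [mul_pow, I_sq, ← ofReal_pow, Real.sq_sqrt hx]
  ring

lemma div_two_I_mul_sub_div_two_I_mul (n₁ n₂ : ℝ) {s₁ s₂ : ℝ} (h₁ : s₁ ≠ 0) (h₂ : s₂ ≠ 0) :
    (n₂ : ℂ) / (2 * (I * s₂)) - n₁ / (2 * (I * s₁)) =
      I * ((1 / 2 * (n₁ / s₁ - n₂ / s₂) : ℝ) : ℂ) := by
  have h₁' : (s₁ : ℂ) ≠ 0 := ofReal_ne_zero.2 h₁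
  have h₂' : (s₂ : ℂ) ≠ 0 := ofReal_ne_zero.2 h₂
  push_cast
  field_simp
  linear_combination ((n₂ : ℂ) * s₁ - s₂ * n₁) * I_sq

lemma div_le_div_sub_div_mul {n₁ n₂ s₁ s₂ t L e : ℝ} (hn₁ : 0 < n₁) (hn₂ : 0 < n₂)
    (hs₁ : 0 < s₁) (hs₂ : 0 < s₂) (ht₁ : s₁ ≤ t) (ht₂ : s₂ ≤ t) (hL : 0 ≤ L)
    (hLe : L ≤ (n₁ ^ 2 * s₂ ^ 2 - n₂ ^ 2 * s₁ ^ 2) * e) :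
    L / ((n₁ + n₂) * t ^ 3) ≤ (n₁ / s₁ - n₂ / s₂) * e := by
  have ht : 0 < t := hs₁.trans_le ht₁
  have hden : s₁ * s₂ * (n₁ * s₂ + n₂ * s₁) ≤ (n₁ + n₂) * t ^ 3 :=
    calc s₁ * s₂ * (n₁ * s₂ + n₂ * s₁) ≤ t * t * (n₁ * t + n₂ * t) := by gcongr
      _ = (n₁ + n₂) * t ^ 3 := by ring
  have hquot : (n₁ / s₁ - n₂ / s₂) * e =
      (n₁ ^ 2 * s₂ ^ 2 - n₂ ^ 2 * s₁ ^ 2) * e / (s₁ * s₂ * (n₁ * s₂ + n₂ * s₁)) := by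
    field_simp
    ring
  rw [hquot]
  exact div_le_div₀ (hL.trans hLe) hLe (by positivity) hden

lemma sq_mul_add_div_sub_sq_mul_add_div_mul (c₁ c₂ n₁ n₂ r : ℝ) (hc₁ : c₁ ≠ 0) (hc₂ : c₂ ≠ 0) :
    (n₁ ^ 2 * (r + n₂ / c₂) - n₂ ^ 2 * (r + n₁ / c₁)) * (c₁ * n₁ - c₂ * n₂) =
      r * ((n₁ ^ 2 - n₂ ^ 2) * (c₁ * n₁ - c₂ * n₂)) +
        n₁ * n₂ * (c₁ * n₁ - c₂ * n₂) ^ 2 / (c₁ * c₂) := by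
  field_simp
  ring

lemma sqrt_add_le_sqrt_mul_sqrt_one_add {r m K : ℝ} (hr : 0 ≤ r) (hmK : m ≤ K) (hK : 1 ≤ K) :
    √(r + m) ≤ √K * √(1 + r) := by
  rw [← Real.sqrt_mul (by linarith)]
  exact Real.sqrt_le_sqrt (by nlinarith)

lemma rpow_neg_one_div_two_eq_inv_sqrt {x : ℝ} (hx : 0 ≤ x) : x ^ (-(1 : ℝ) / 2) = (√x)⁻¹ := by
  rw [neg_div, Real.rpow_neg hx, Real.sqrt_eq_rpow]

lemma sq_sub_sq_mul_pos_of_sub_mul_neg {c₁ c₂ n₁ n₂ : ℝ} (hc₁ : 0 < c₁) (hn₁ : 0 < n₁)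
    (hn₂ : 0 < n₂) (hcond : (c₁ - c₂) * (c₁ * n₁ - c₂ * n₂) < 0) :
    0 < (n₁ ^ 2 - n₂ ^ 2) * (c₁ * n₁ - c₂ * n₂) := by
  set e := c₁ * n₁ - c₂ * n₂
  have hdiff : 0 < c₁ * ((n₁ - n₂) * e) := by
    have he : e ≠ 0 := right_ne_zero_of_mul hcond.ne
    rw [show c₁ * ((n₁ - n₂) * e) = e ^ 2 - n₂ * ((c₁ - c₂) * e) by ring]
    nlinarith [sq_pos_of_ne_zero he]
  rw [show (n₁ ^ 2 - n₂ ^ 2) * e = (n₁ + n₂) * ((n₁ - n₂) * e) by ring]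
  exact mul_pos (by positivity) (pos_of_mul_pos_right hdiff hc₁.le)

lemma exists_pos_mul_rpow_le_div_sub_div_mul {c₁ c₂ n₁ n₂ : ℝ} (hc₁ : 0 < c₁) (hc₂ : 0 < c₂)
    (hn₁ : 0 < n₁) (hn₂ : 0 < n₂) (hcond : (c₁ - c₂) * (c₁ * n₁ - c₂ * n₂) < 0) :
    ∃ C, 0 < C ∧ ∀ r : ℝ, 0 ≤ r → C * (1 + r) ^ (-(1 : ℝ) / 2) ≤
      1 / 2 * (n₁ / √(r + n₁ / c₁) - n₂ / √(r + n₂ / c₂)) * (c₁ * n₁ - c₂ * n₂) := by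
  set e := c₁ * n₁ - c₂ * n₂
  have he : e ≠ 0 := right_ne_zero_of_mul hcond.ne
  have hA := sq_sub_sq_mul_pos_of_sub_mul_neg hc₁ hn₁ hn₂ hcond
  set A := (n₁ ^ 2 - n₂ ^ 2) * e
  set B := n₁ * n₂ * e ^ 2 / (c₁ * c₂)
  have hB : 0 < B := by positivity
  set K := 1 + n₁ / c₁ + n₂ / c₂
  have hK : 1 ≤ K := by simp only [K]; linarith [div_pos hn₁ hc₁, div_pos hn₂ hc₂]
  refine ⟨min A B / (2 * ((n₁ + n₂) * √K ^ 3)), by positivity, fun r hr => ?_⟩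
  have hs₁ : 0 < √(r + n₁ / c₁) := Real.sqrt_pos.2 (by positivity)
  have hs₂ : 0 < √(r + n₂ / c₂) := Real.sqrt_pos.2 (by positivity)
  have hnum : min A B * (1 + r) ≤
      (n₁ ^ 2 * √(r + n₂ / c₂) ^ 2 - n₂ ^ 2 * √(r + n₁ / c₁) ^ 2) * e := by
    rw [Real.sq_sqrt (by positivity), Real.sq_sqrt (by positivity),
      sq_mul_add_div_sub_sq_mul_add_div_mul c₁ c₂ n₁ n₂ r hc₁.ne' hc₂.ne']
    nlinarith [min_le_left A B, min_le_right A B]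
  have hm₁K : n₁ / c₁ ≤ K := by simp only [K]; linarith [div_pos hn₂ hc₂]
  have hm₂K : n₂ / c₂ ≤ K := by simp only [K]; linarith [div_pos hn₁ hc₁]
  have hlow := div_le_div_sub_div_mul hn₁ hn₂ hs₁ hs₂
    (sqrt_add_le_sqrt_mul_sqrt_one_add hr hm₁K hK) (sqrt_add_le_sqrt_mul_sqrt_one_add hr hm₂K hK)
    (by positivity) hnum
  have hbsq : √(1 + r) ^ 2 = 1 + r := Real.sq_sqrt (by linarith)
  calc min A B / (2 * ((n₁ + n₂) * √K ^ 3)) * (1 + r) ^ (-(1 : ℝ) / 2)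
      = 1 / 2 * (min A B * (1 + r) / ((n₁ + n₂) * (√K * √(1 + r)) ^ 3)) := by
        rw [rpow_neg_one_div_two_eq_inv_sqrt (by linarith)]
        field_simp
        rw [hbsq]
    _ ≤ 1 / 2 * ((n₁ / √(r + n₁ / c₁) - n₂ / √(r + n₂ / c₂)) * e) := by gcongr
    _ = _ := by ring

/-- The computation of `κ(−1)` and the lower bound (5.34) of the paper: with
`mⱼ = nⱼ/cⱼ`, `ρⱼ = i√(r₀ + mⱼ)` (the unique root with positive imaginary part of
`ρ² + r₀ = mⱼ·(−1)`) and `κ(−1) = n₂/(2ρ₂) − n₁/(2ρ₁)`, one has `Re κ(−1) = 0` and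
`Im κ(−1) = (1/2)(n₁/√(r₀+m₁) − n₂/√(r₀+m₂))`; if moreover `(c₁−c₂)(c₁n₁−c₂n₂) < 0`,
then `Im κ(−1)` is nonzero of the sign of `c₁n₁ − c₂n₂` for every `r₀ ≥ 0`, and there is
`C > 0` depending only on `c₁, c₂, n₁, n₂` with `|κ(−1)| ≥ C (1+r₀)^{−1/2}` for all `r₀ ≥ 0`. -/
theorem stmt_14 (c₁ c₂ n₁ n₂ : ℝ) (hc₁ : 0 < c₁) (hc₂ : 0 < c₂) (hn₁ : 0 < n₁) (hn₂ : 0 < n₂) :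
    let m₁ : ℝ := n₁ / c₁
    let m₂ : ℝ := n₂ / c₂
    let ρ₁ : ℝ → ℂ := fun r₀ => Complex.I * (Real.sqrt (r₀ + m₁) : ℝ)
    let ρ₂ : ℝ → ℂ := fun r₀ => Complex.I * (Real.sqrt (r₀ + m₂) : ℝ)
    let κ : ℝ → ℂ := fun r₀ => (n₂ : ℂ) / (2 * ρ₂ r₀) - (n₁ : ℂ) / (2 * ρ₁ r₀)
    (∀ r₀ : ℝ, 0 ≤ r₀ →
      (0 < (ρ₁ r₀).im ∧ (ρ₁ r₀) ^ 2 + (r₀ : ℂ) = (m₁ : ℂ) * (-1) ∧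
        0 < (ρ₂ r₀).im ∧ (ρ₂ r₀) ^ 2 + (r₀ : ℂ) = (m₂ : ℂ) * (-1)) ∧
      (κ r₀).re = 0 ∧
      (κ r₀).im = (1 / 2) * (n₁ / Real.sqrt (r₀ + m₁) - n₂ / Real.sqrt (r₀ + m₂))) ∧
    ((c₁ - c₂) * (c₁ * n₁ - c₂ * n₂) < 0 →
      (∀ r₀ : ℝ, 0 ≤ r₀ → (κ r₀).im ≠ 0 ∧ 0 < (κ r₀).im * (c₁ * n₁ - c₂ * n₂)) ∧
      ∃ C : ℝ, 0 < C ∧ ∀ r₀ : ℝ, 0 ≤ r₀ →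
        C * (1 + r₀) ^ (-(1 : ℝ) / 2) ≤ ‖κ r₀‖) := by
  intro m₁ m₂ ρ₁ ρ₂ κ
  have hs₁ : ∀ r : ℝ, 0 ≤ r → 0 < √(r + m₁) := fun r hr => Real.sqrt_pos.2 (by positivity)
  have hs₂ : ∀ r : ℝ, 0 ≤ r → 0 < √(r + m₂) := fun r hr => Real.sqrt_pos.2 (by positivity)
  have hκ : ∀ r : ℝ, 0 ≤ r → κ r = I * ((1 / 2 * (n₁ / √(r + m₁) - n₂ / √(r + m₂)) : ℝ) : ℂ) :=
    fun r hr => div_two_I_mul_sub_div_two_I_mul n₁ n₂ (hs₁ r hr).ne' (hs₂ r hr).ne'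
  have him : ∀ r : ℝ, 0 ≤ r → (κ r).im = 1 / 2 * (n₁ / √(r + m₁) - n₂ / √(r + m₂)) := by
    intro r hr
    simp [hκ r hr]
  refine ⟨fun r hr => ⟨⟨by simpa [ρ₁] using hs₁ r hr, ?_, by simpa [ρ₂] using hs₂ r hr, ?_⟩,
    by simp [hκ r hr], him r hr⟩, fun hcond => ?_⟩
  · rw [I_mul_ofReal_sqrt_sq (by positivity)]
    push_cast
    ring
  · rw [I_mul_ofReal_sqrt_sq (by positivity)]
    push_cast
    ring
  obtain ⟨C, hC, hCle⟩ := exists_pos_mul_rpow_le_div_sub_div_mul hc₁ hc₂ hn₁ hn₂ hcond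
  have hbound : ∀ r : ℝ, 0 ≤ r → C * (1 + r) ^ (-(1 : ℝ) / 2) ≤ (κ r).im * (c₁ * n₁ - c₂ * n₂) :=
    fun r hr => him r hr ▸ hCle r hr
  have hsign : ∀ r : ℝ, 0 ≤ r → 0 < (κ r).im * (c₁ * n₁ - c₂ * n₂) :=
    fun r hr => (by positivity : 0 < C * (1 + r) ^ (-(1 : ℝ) / 2)).trans_le (hbound r hr)
  have he : c₁ * n₁ - c₂ * n₂ ≠ 0 := right_ne_zero_of_mul (hsign 0 le_rfl).ne'
  refine ⟨fun r hr => ⟨left_ne_zero_of_mul (hsign r hr).ne', hsign r hr⟩,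
    C / |c₁ * n₁ - c₂ * n₂|, by positivity, fun r hr => ?_⟩
  calc C / |c₁ * n₁ - c₂ * n₂| * (1 + r) ^ (-(1 : ℝ) / 2)
      = C * (1 + r) ^ (-(1 : ℝ) / 2) / |c₁ * n₁ - c₂ * n₂| := by ring
    _ ≤ |(κ r).im * (c₁ * n₁ - c₂ * n₂)| / |c₁ * n₁ - c₂ * n₂| := by
        gcongr
        exact (hbound r hr).trans (le_abs_self _)
    _ = ‖κ r‖ := by
        rw [abs_mul, mul_div_cancel_right₀ _ (abs_ne_zero.2 he), him r hr, hκ r hr, norm_mul,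
          norm_I, one_mul, norm_real, Real.norm_eq_abs]
end

section
/- Let c₁, c₂, n₁, n₂ > 0 be real numbers, m_j := n_j/c_j (j = 1,2), and r₀ ≥ 0 real. For each z ∈ ℂ with Re z = −1 and |Im z| ≤ 1 let ρ_j(z) be the unique complex number with Im ρ_j(z) > 0 and ρ_j(z)² + r₀ = m_j·z, and set κ(z) := n₂/(2ρ₂(z)) − n₁/(2ρ₁(z)). Then there is a constant C > 0 depending only on c₁, c₂, n₁, n₂ (and not on r₀ or z) such that |κ(z) − κ(−1)| ≤ C·|Im z|·(1 + r₀)^{−3/2} for all such z and all r₀ ≥ 0. -/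
/-!
Write `a = √(r₀ + m)`, so that `ρ(−1) = i a`. Since `ρ(−1)² − ρ(z)² = −i m Im z`, the identity
`1/ρ − 1/σ = (σ² − ρ²) / (ρ σ (ρ + σ))` reduces the estimate to lower bounds on the three factors
of the denominator: `|ρ(z)|² ≥ |Re ρ(z)²| = a²`, `|i a| = a`, and `|ρ(z) + i a| ≥ Im (ρ(z) + i a) ≥ a`
because `Im ρ(z) > 0`. This gives `|κ(z) − κ(−1)| ≲ |Im z| a⁻³`, and
`a² ≥ min(1, m) (1 + r₀)` turns `a⁻³` into `(1 + r₀)^{−3/2}`.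
-/

open Complex

lemma norm_inv_sub_inv_le_of_le_im {ρ σ : ℂ} {a : ℝ} (ha : 0 < a) (hρ : a ≤ ‖ρ‖)
    (hρim : 0 ≤ ρ.im) (hσim : a ≤ σ.im) :
    ‖ρ⁻¹ - σ⁻¹‖ ≤ ‖σ ^ 2 - ρ ^ 2‖ / a ^ 3 := by
  have hσ : a ≤ ‖σ‖ := hσim.trans (im_le_norm σ)
  have hsum : a ≤ ‖ρ + σ‖ := by
    calc a ≤ (ρ + σ).im := by rw [add_im]; linarith
      _ ≤ ‖ρ + σ‖ := im_le_norm _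
  have hρ0 : ρ ≠ 0 := norm_pos_iff.mp (ha.trans_le hρ)
  have hσ0 : σ ≠ 0 := norm_pos_iff.mp (ha.trans_le hσ)
  have hsum0 : ρ + σ ≠ 0 := norm_pos_iff.mp (ha.trans_le hsum)
  have hident : ρ⁻¹ - σ⁻¹ = (σ ^ 2 - ρ ^ 2) / (ρ * σ * (ρ + σ)) := by
    field_simp
    ring
  calc ‖ρ⁻¹ - σ⁻¹‖ = ‖σ ^ 2 - ρ ^ 2‖ / (‖ρ‖ * ‖σ‖ * ‖ρ + σ‖) := by
        rw [hident, norm_div, norm_mul, norm_mul]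
    _ ≤ ‖σ ^ 2 - ρ ^ 2‖ / (a * a * a) := by gcongr
    _ = ‖σ ^ 2 - ρ ^ 2‖ / a ^ 3 := by ring

section Root

variable {m r₀ : ℝ} {z ρ : ℂ}

lemma re_sq_of_sq_add_eq (hre : z.re = -1) (heq : ρ ^ 2 + r₀ = (m : ℂ) * z) :
    (ρ ^ 2).re = -(r₀ + m) := by
  have h := congrArg re heq
  simp only [add_re, ofReal_re, re_ofReal_mul, hre] at h
  linarith

lemma sqrt_le_norm_of_sq_add_eq (hre : z.re = -1) (heq : ρ ^ 2 + r₀ = (m : ℂ) * z) :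
    √(r₀ + m) ≤ ‖ρ‖ := by
  rw [← Real.sqrt_sq (norm_nonneg ρ), ← norm_pow]
  apply Real.sqrt_le_sqrt
  calc r₀ + m = -(ρ ^ 2).re := by rw [re_sq_of_sq_add_eq hre heq, neg_neg]
    _ ≤ |(ρ ^ 2).re| := neg_le_abs _
    _ ≤ ‖ρ ^ 2‖ := abs_re_le_norm _

lemma norm_sq_sub_sq_of_sq_add_eq (hm : 0 < m) (hr : 0 ≤ r₀) (hre : z.re = -1)
    (heq : ρ ^ 2 + r₀ = (m : ℂ) * z) :
    ‖(I * (√(r₀ + m) : ℝ)) ^ 2 - ρ ^ 2‖ = m * |z.im| := by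
  have hz : z = -1 + z.im * I := by apply Complex.ext <;> simp [hre]
  have hsq : ((√(r₀ + m) : ℝ) : ℂ) ^ 2 = r₀ + m := by
    rw [← ofReal_pow, Real.sq_sqrt (by positivity), ofReal_add]
  have hdiff : (I * (√(r₀ + m) : ℝ)) ^ 2 - ρ ^ 2 = -(m * z.im) * I := by
    linear_combination I ^ 2 * hsq + (r₀ + m : ℂ) * I_sq - heq - (m : ℂ) * hz
  rw [hdiff, norm_mul, norm_I, mul_one, norm_neg, ← ofReal_mul, norm_real, Real.norm_eq_abs,
    abs_mul, abs_of_pos hm]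

lemma norm_div_two_root_sub_le (n : ℂ) (hm : 0 < m) (hr : 0 ≤ r₀) (hre : z.re = -1)
    (hρ : 0 < ρ.im) (heq : ρ ^ 2 + r₀ = (m : ℂ) * z) :
    ‖n / (2 * ρ) - n / (2 * (I * (√(r₀ + m) : ℝ)))‖ ≤ ‖n‖ * m * |z.im| / (2 * √(r₀ + m) ^ 3) := by
  have ha : 0 < √(r₀ + m) := Real.sqrt_pos.mpr (by positivity)
  have hσim : (I * (√(r₀ + m) : ℝ)).im = √(r₀ + m) := by simp
  have hinv := norm_inv_sub_inv_le_of_le_im ha (sqrt_le_norm_of_sq_add_eq hre heq) hρ.le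
    hσim.ge
  rw [norm_sq_sub_sq_of_sq_add_eq hm hr hre heq] at hinv
  calc ‖n / (2 * ρ) - n / (2 * (I * (√(r₀ + m) : ℝ)))‖
      = ‖n‖ / 2 * ‖ρ⁻¹ - (I * (√(r₀ + m) : ℝ))⁻¹‖ := by
        rw [← Complex.norm_two, ← norm_div, ← norm_mul]
        ring_nf
    _ ≤ ‖n‖ / 2 * (m * |z.im| / √(r₀ + m) ^ 3) := by gcongr
    _ = ‖n‖ * m * |z.im| / (2 * √(r₀ + m) ^ 3) := by ring

end Root

lemma inv_sqrt_add_pow_three_le {m : ℝ} (r₀ : ℝ) (hm : 0 < m) (hr : 0 ≤ r₀) :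
    (√(r₀ + m) ^ 3)⁻¹ ≤ (√(min 1 m) ^ 3)⁻¹ * (1 + r₀) ^ (-(3 : ℝ) / 2) := by
  have hpow : (1 + r₀) ^ (-(3 : ℝ) / 2) = (√(1 + r₀) ^ 3)⁻¹ := by
    rw [Real.sqrt_eq_rpow, ← Real.rpow_natCast, ← Real.rpow_mul (by positivity),
      ← Real.rpow_neg (by positivity)]
    norm_num
  rw [hpow, ← mul_inv, ← mul_pow, ← Real.sqrt_mul (by positivity)]
  gcongr
  rcases min_cases 1 m with ⟨h, _⟩ | ⟨h, _⟩ <;> rw [h] <;> nlinarith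

lemma norm_div_two_root_sub_le_rpow {m r₀ : ℝ} {z ρ : ℂ} (n : ℂ) (hm : 0 < m) (hr : 0 ≤ r₀)
    (hre : z.re = -1) (hρ : 0 < ρ.im) (heq : ρ ^ 2 + r₀ = (m : ℂ) * z) :
    ‖n / (2 * ρ) - n / (2 * (I * (√(r₀ + m) : ℝ)))‖ ≤
      ‖n‖ * m / (2 * √(min 1 m) ^ 3) * |z.im| * (1 + r₀) ^ (-(3 : ℝ) / 2) := by
  calc ‖n / (2 * ρ) - n / (2 * (I * (√(r₀ + m) : ℝ)))‖
      ≤ ‖n‖ * m * |z.im| / 2 * (√(r₀ + m) ^ 3)⁻¹ := by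
        rw [← div_eq_mul_inv, div_div]
        exact norm_div_two_root_sub_le n hm hr hre hρ heq
    _ ≤ ‖n‖ * m * |z.im| / 2 * ((√(min 1 m) ^ 3)⁻¹ * (1 + r₀) ^ (-(3 : ℝ) / 2)) := by
        gcongr
        exact inv_sqrt_add_pow_three_le r₀ hm hr
    _ = ‖n‖ * m / (2 * √(min 1 m) ^ 3) * |z.im| * (1 + r₀) ^ (-(3 : ℝ) / 2) := by ring

/-- Estimate (5.33) of the paper: along `Z₂ = {Re z = −1, |Im z| ≤ 1}`, with `mⱼ = nⱼ/cⱼ`,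
`ρⱼ(z)` the root with positive imaginary part of `ρ² + r₀ = mⱼ z` and
`κ(z) = n₂/(2ρ₂(z)) − n₁/(2ρ₁(z))` (so that `ρⱼ(−1) = i√(r₀+mⱼ)`), there is a constant
`C > 0` depending only on `c₁, c₂, n₁, n₂` such that
`|κ(z) − κ(−1)| ≤ C |Im z| (1+r₀)^{−3/2}` for all `r₀ ≥ 0` and all such `z`. -/
theorem stmt_15 (c₁ c₂ n₁ n₂ : ℝ) (hc₁ : 0 < c₁) (hc₂ : 0 < c₂) (hn₁ : 0 < n₁) (hn₂ : 0 < n₂) :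
    ∃ C : ℝ, 0 < C ∧
      ∀ r₀ : ℝ, 0 ≤ r₀ → ∀ z : ℂ, z.re = -1 → |z.im| ≤ 1 →
        ∀ ρ₁ ρ₂ : ℂ, 0 < ρ₁.im → 0 < ρ₂.im →
          ρ₁ ^ 2 + (r₀ : ℂ) = ((n₁ / c₁ : ℝ) : ℂ) * z →
          ρ₂ ^ 2 + (r₀ : ℂ) = ((n₂ / c₂ : ℝ) : ℂ) * z →
          Norm.norm
              (((n₂ : ℂ) / (2 * ρ₂) - (n₁ : ℂ) / (2 * ρ₁)) -
                ((n₂ : ℂ) / (2 * (Complex.I * (Real.sqrt (r₀ + n₂ / c₂) : ℝ))) -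
                  (n₁ : ℂ) / (2 * (Complex.I * (Real.sqrt (r₀ + n₁ / c₁) : ℝ))))) ≤
            C * |z.im| * (1 + r₀) ^ (-(3 : ℝ) / 2) := by
  have hm₁ : 0 < n₁ / c₁ := by positivity
  have hm₂ : 0 < n₂ / c₂ := by positivity
  have hK (n m : ℝ) (hn : 0 < n) (hm : 0 < m) : 0 < ‖(n : ℂ)‖ * m / (2 * √(min 1 m) ^ 3) := by
    have : 0 < √(min 1 m) := Real.sqrt_pos.mpr (lt_min one_pos hm)
    rw [norm_real, Real.norm_of_nonneg hn.le]
    positivity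
  refine ⟨‖(n₁ : ℂ)‖ * (n₁ / c₁) / (2 * √(min 1 (n₁ / c₁)) ^ 3) +
    ‖(n₂ : ℂ)‖ * (n₂ / c₂) / (2 * √(min 1 (n₂ / c₂)) ^ 3),
    add_pos (hK n₁ _ hn₁ hm₁) (hK n₂ _ hn₂ hm₂), ?_⟩
  intro r₀ hr z hre _ ρ₁ ρ₂ hρ₁ hρ₂ heq₁ heq₂
  rw [sub_sub_sub_comm]
  refine (norm_sub_le _ _).trans ?_
  linarith [norm_div_two_root_sub_le_rpow (n₁ : ℂ) hm₁ hr hre hρ₁ heq₁,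
    norm_div_two_root_sub_le_rpow (n₂ : ℂ) hm₂ hr hre hρ₂ heq₂]
end

section
/- Let m > 0 and r₀ ≥ 0 be real numbers, let z ∈ ℂ with |Re z| ≤ 1, and let ρ ∈ ℂ satisfy Im ρ > 0 and ρ² + r₀ = m·z. Then |Im(z/ρ)| ≤ (2/m)·Im ρ + Im ρ/|ρ|². -/
/-!
Dividing `ρ² + r₀ = m z` by `ρ` gives `m · z/ρ = ρ + r₀ ρ⁻¹`, hence
`m · Im(z/ρ) = Im ρ · (1 - r₀/|ρ|²)`. The real part of the same equation together with
`Re z ≤ 1` gives `r₀ ≤ m + |ρ|²`, so `|1 - r₀/|ρ|²| ≤ 1 + m/|ρ|²`.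
-/

namespace Complex

variable {m r : ℝ} {z ρ : ℂ}

theorem mul_im_div_of_sq_add_eq (h : ρ ^ 2 + r = m * z) :
    m * (z / ρ).im = ρ.im * (1 - r / normSq ρ) := by
  have hdiv : (m : ℂ) * (z / ρ) = ρ + r * ρ⁻¹ := by
    rw [← mul_div_assoc, ← h, add_div, sq, mul_self_div_self, div_eq_mul_inv]
  have him := congrArg im hdiv
  simp only [im_ofReal_mul, add_im, inv_im] at him
  rw [him]
  ring

theorem le_add_normSq_of_sq_add_eq (hm : 0 ≤ m) (hz : z.re ≤ 1) (h : ρ ^ 2 + r = m * z) :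
    r ≤ m + normSq ρ := by
  have hre : ρ.re ^ 2 - ρ.im ^ 2 + r = m * z.re := by
    simpa [sq] using congrArg re h
  have hmz : m * z.re ≤ m := mul_le_of_le_one_right hm hz
  rw [normSq_apply]
  nlinarith [sq_nonneg ρ.re]

theorem abs_one_sub_div_normSq_le (hm : 0 ≤ m) (hr : 0 ≤ r) (hz : z.re ≤ 1)
    (h : ρ ^ 2 + r = m * z) : |1 - r / normSq ρ| ≤ 1 + m / normSq ρ := by
  have hs := normSq_nonneg ρ
  have hupper : r / normSq ρ ≤ m / normSq ρ + 1 :=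
    calc r / normSq ρ ≤ (m + normSq ρ) / normSq ρ :=
          div_le_div_of_nonneg_right (le_add_normSq_of_sq_add_eq hm hz h) hs
      _ ≤ m / normSq ρ + 1 := by rw [add_div]; gcongr; exact div_self_le_one _
  rw [abs_le]
  constructor
  · linarith
  · linarith [div_nonneg hr hs, div_nonneg hm hs]

theorem abs_im_div_le_of_sq_add_eq (hm : 0 < m) (hr : 0 ≤ r) (hz : z.re ≤ 1)
    (h : ρ ^ 2 + r = m * z) :
    |(z / ρ).im| ≤ |ρ.im| / m + |ρ.im| / normSq ρ := by
  have hmul : m * |(z / ρ).im| = |ρ.im| * |1 - r / normSq ρ| := by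
    rw [← abs_mul, ← mul_im_div_of_sq_add_eq h, abs_mul, abs_of_pos hm]
  have hbound : m * |(z / ρ).im| ≤ m * (|ρ.im| / m + |ρ.im| / normSq ρ) :=
    calc m * |(z / ρ).im| ≤ |ρ.im| * (1 + m / normSq ρ) := by
          rw [hmul]; gcongr; exact abs_one_sub_div_normSq_le hm.le hr hz h
      _ = m * (|ρ.im| / m + |ρ.im| / normSq ρ) := by field_simp
  exact le_of_mul_le_mul_left hbound hm

end Complex

/-- The bound on `Im(z ρ⁻¹)` from the proof of Lemma 4.1 of the paper, stated as a fact
about complex numbers: if `m > 0`, `r₀ ≥ 0`, `|Re z| ≤ 1`, `Im ρ > 0` and `ρ² + r₀ = m z`,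
then `|Im(z/ρ)| ≤ (2/m) Im ρ + Im ρ / |ρ|²`. -/
theorem stmt_17 (m r₀ : ℝ) (hm : 0 < m) (hr₀ : 0 ≤ r₀) (z ρ : ℂ)
    (hzre : |z.re| ≤ 1) (hρ : 0 < ρ.im) (heq : ρ ^ 2 + (r₀ : ℂ) = (m : ℂ) * z) :
    |(z / ρ).im| ≤ (2 / m) * ρ.im + ρ.im / ‖ρ‖ ^ 2 := by
  have hbound := Complex.abs_im_div_le_of_sq_add_eq hm hr₀ (abs_le.mp hzre).2 heq
  rw [abs_of_pos hρ] at hbound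
  rw [← Complex.normSq_eq_norm_sq]
  have hcoeff : ρ.im / m ≤ 2 / m * ρ.im := by
    rw [div_mul_eq_mul_div]; gcongr; linarith
  linarith
end

section
/- Let m₁, m₂ > 0 be real numbers with m₁ ≠ m₂, let r₀ ≥ 0 be real, and let z ∈ ℂ with |Re z| ≤ 1, |Im z| ≤ 1 and |z| ≥ 1. Let ρ₁, ρ₂ ∈ ℂ satisfy Im ρ_j > 0 and ρ_j² + r₀ = m_j·z for j = 1,2. Then ρ₁ ≠ ρ₂ and |ρ₁ − ρ₂| ≥ C(1 + r₀)^{−1/2}, where C > 0 depends only on m₁ and m₂ (for instance C = |m₁ − m₂|/(2·√(1 + 2·max(m₁,m₂))) works). -/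
/-!
Subtracting the two equations gives `(ρ₁ - ρ₂)(ρ₁ + ρ₂) = (m₁ - m₂) z`, whose norm is at least
`|m₁ - m₂|` since `|z| ≥ 1`. Each root satisfies `|ρⱼ|² ≤ mⱼ |z| + r₀ ≤ (1 + 2 max(m₁, m₂))(1 + r₀)`
because `|z| ≤ |Re z| + |Im z| ≤ 2`, which bounds `|ρ₁ + ρ₂|` and hence `|ρ₁ - ρ₂|` from below.
-/

lemma norm_sub_mul_norm_add_of_sq_add_eq {ρ₁ ρ₂ w z : ℂ} {m₁ m₂ : ℝ}
    (h₁ : ρ₁ ^ 2 + w = m₁ * z) (h₂ : ρ₂ ^ 2 + w = m₂ * z) :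
    ‖ρ₁ - ρ₂‖ * ‖ρ₁ + ρ₂‖ = |m₁ - m₂| * ‖z‖ := by
  rw [← Real.norm_eq_abs, ← Complex.norm_real, ← norm_mul, ← norm_mul]
  congr 1
  push_cast
  linear_combination h₁ - h₂

lemma norm_le_sqrt_mul_sqrt_of_sq_add_eq {ρ z : ℂ} {m M r : ℝ} (hm : 0 ≤ m) (hmM : m ≤ M)
    (hr : 0 ≤ r) (hz : ‖z‖ ≤ 2) (h : ρ ^ 2 + r = m * z) :
    ‖ρ‖ ≤ √(1 + 2 * M) * √(1 + r) := by
  have hM : 0 ≤ M := hm.trans hmM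
  rw [← Real.sqrt_mul (by positivity), Real.le_sqrt (norm_nonneg _) (by positivity),
    ← norm_pow, eq_sub_of_add_eq h]
  calc ‖(m : ℂ) * z - r‖ ≤ m * ‖z‖ + r := by
        simpa [abs_of_nonneg hm, abs_of_nonneg hr] using norm_sub_le ((m : ℂ) * z) r
    _ ≤ (1 + 2 * M) * (1 + r) := by nlinarith [norm_nonneg z]

theorem stmt_18_general (m₁ m₂ : ℝ) (hm₁ : 0 < m₁) (hm₂ : 0 < m₂) (hne : m₁ ≠ m₂)
    (r₀ : ℝ) (hr₀ : 0 ≤ r₀) (z : ℂ) (hzre : |z.re| ≤ 1) (hzim : |z.im| ≤ 1)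
    (hz : 1 ≤ ‖z‖) (ρ₁ ρ₂ : ℂ)
    (heq₁ : ρ₁ ^ 2 + (r₀ : ℂ) = (m₁ : ℂ) * z)
    (heq₂ : ρ₂ ^ 2 + (r₀ : ℂ) = (m₂ : ℂ) * z) :
    ρ₁ ≠ ρ₂ ∧
    |m₁ - m₂| / (2 * Real.sqrt (1 + 2 * max m₁ m₂)) * (1 + r₀) ^ (-(1 : ℝ) / 2) ≤
      ‖ρ₁ - ρ₂‖ := by
  have hprod := norm_sub_mul_norm_add_of_sq_add_eq heq₁ heq₂
  have hdm : 0 < |m₁ - m₂| := abs_pos.mpr (sub_ne_zero.mpr hne)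
  refine ⟨fun h => ?_, ?_⟩
  · rw [h, sub_self, norm_zero, zero_mul] at hprod
    nlinarith
  have hz₂ : ‖z‖ ≤ 2 := (Complex.norm_le_abs_re_add_abs_im z).trans (by linarith)
  have hsum : ‖ρ₁ + ρ₂‖ ≤ 2 * √(1 + 2 * max m₁ m₂) * √(1 + r₀) := by
    have h₁ := norm_le_sqrt_mul_sqrt_of_sq_add_eq hm₁.le (le_max_left m₁ m₂) hr₀ hz₂ heq₁
    have h₂ := norm_le_sqrt_mul_sqrt_of_sq_add_eq hm₂.le (le_max_right m₁ m₂) hr₀ hz₂ heq₂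
    linarith [norm_add_le ρ₁ ρ₂]
  have hpow : (1 + r₀) ^ (-(1 : ℝ) / 2) = (√(1 + r₀))⁻¹ := by
    rw [Real.sqrt_eq_rpow, ← Real.rpow_neg (by positivity)]
    norm_num
  have hS : 0 < √(1 + 2 * max m₁ m₂) := Real.sqrt_pos.mpr (by positivity)
  have hT : 0 < √(1 + r₀) := Real.sqrt_pos.mpr (by positivity)
  rw [hpow, ← div_eq_mul_inv, div_div, div_le_iff₀ (by positivity)]
  calc |m₁ - m₂| ≤ |m₁ - m₂| * ‖z‖ := le_mul_of_one_le_right (abs_nonneg _) hz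
    _ = ‖ρ₁ - ρ₂‖ * ‖ρ₁ + ρ₂‖ := hprod.symm
    _ ≤ ‖ρ₁ - ρ₂‖ * (2 * √(1 + 2 * max m₁ m₂) * √(1 + r₀)) := by gcongr

/-- The lower bound `|ρ₁ − ρ₂| ≥ C ⟨ξ'⟩⁻¹` underlying Case 1 (`c₀ ≡ 0`) of Section 5 of
the paper: for `m₁ ≠ m₂ > 0`, `r₀ ≥ 0`, `|Re z| ≤ 1`, `|Im z| ≤ 1`, `|z| ≥ 1`, and roots
`ρⱼ` with `Im ρⱼ > 0`, `ρⱼ² + r₀ = mⱼ z`, one has `ρ₁ ≠ ρ₂` and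
`|ρ₁ − ρ₂| ≥ (|m₁ − m₂|/(2 √(1 + 2 max(m₁,m₂)))) (1 + r₀)^{−1/2}`. -/
theorem stmt_18 (m₁ m₂ : ℝ) (hm₁ : 0 < m₁) (hm₂ : 0 < m₂) (hne : m₁ ≠ m₂)
    (r₀ : ℝ) (hr₀ : 0 ≤ r₀) (z : ℂ) (hzre : |z.re| ≤ 1) (hzim : |z.im| ≤ 1)
    (hz : 1 ≤ ‖z‖) (ρ₁ ρ₂ : ℂ) (hρ₁ : 0 < ρ₁.im) (hρ₂ : 0 < ρ₂.im)
    (heq₁ : ρ₁ ^ 2 + (r₀ : ℂ) = (m₁ : ℂ) * z)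
    (heq₂ : ρ₂ ^ 2 + (r₀ : ℂ) = (m₂ : ℂ) * z) :
    ρ₁ ≠ ρ₂ ∧
    |m₁ - m₂| / (2 * Real.sqrt (1 + 2 * max m₁ m₂)) * (1 + r₀) ^ (-(1 : ℝ) / 2) ≤
      ‖ρ₁ - ρ₂‖ :=
  stmt_18_general m₁ m₂ hm₁ hm₂ hne r₀ hr₀ z hzre hzim hz ρ₁ ρ₂ heq₁ heq₂
end
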